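/- arXiv:math/0412001 — 2 statements merged into one kernel-verified Lean document; each statement's English description precedes it below -/
import Mathlib

section
/- Every symmetry of a comonad is a strong braiding. That is, if t: G∘G ⟹ G∘G satisfies the QYBE together with t² = id, tδ = δ, ε_G t = G(ε), and δ_G t = G(t) t_G G(δ), then t also satisfies G(ε) t = ε_G and t_G G(t) δ_G = G(δ) t. -/
open CategoryTheory

/-- every symmetry of a comonad is a strong braiding.  If `t : G∘G ⟹ G∘G`
satisfies the QYBE together with `t² = id`, `t∘δ = δ`, `ε_G∘t = G(ε)` and
`δ_G∘t = G(t)∘t_G∘G(δ)`, then also `G(ε)∘t = ε_G` and `t_G∘G(t)∘δ_G = G(δ)∘t`. -/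
theorem symmetry_is_strong_braiding {A : Type*} [Category A] (G : Comonad A)
    (t : G.toFunctor ⋙ G.toFunctor ⟶ G.toFunctor ⋙ G.toFunctor)
    (hqybe : ∀ M : A, G.toFunctor.map (t.app M) ≫ t.app (G.toFunctor.obj M) ≫
        G.toFunctor.map (t.app M) =
      t.app (G.toFunctor.obj M) ≫ G.toFunctor.map (t.app M) ≫ t.app (G.toFunctor.obj M))
    (hsq : ∀ M : A, t.app M ≫ t.app M = 𝟙 ((G.toFunctor ⋙ G.toFunctor).obj M))
    (hδ : ∀ M : A, G.δ.app M ≫ t.app M = G.δ.app M)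
    (hε : ∀ M : A, t.app M ≫ G.ε.app (G.toFunctor.obj M) = G.toFunctor.map (G.ε.app M))
    (hδG : ∀ M : A, t.app M ≫ G.δ.app (G.toFunctor.obj M) =
      G.toFunctor.map (G.δ.app M) ≫ t.app (G.toFunctor.obj M) ≫ G.toFunctor.map (t.app M)) :
    (∀ M : A, t.app M ≫ G.toFunctor.map (G.ε.app M) = G.ε.app (G.toFunctor.obj M)) ∧
    (∀ M : A, G.δ.app (G.toFunctor.obj M) ≫ G.toFunctor.map (t.app M) ≫
        t.app (G.toFunctor.obj M) = t.app M ≫ G.toFunctor.map (G.δ.app M)) := by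
  constructor
  · intro M
    rw [← hε M, ← Category.assoc, hsq M, Category.id_comp]
  · intro M
    have hδG' : G.δ.app (G.toFunctor.obj M) =
        t.app M ≫ G.toFunctor.map (G.δ.app M) ≫ t.app (G.toFunctor.obj M) ≫
          G.toFunctor.map (t.app M) := by
      rw [← hδG M, ← Category.assoc, hsq M, Category.id_comp]
    rw [hδG']
    have h2 : G.toFunctor.map (t.app M) ≫ G.toFunctor.map (t.app M) =
        𝟙 _ := by rw [← G.toFunctor.map_comp, hsq M, G.toFunctor.map_id]
    simp only [Category.assoc]
    rw [← Category.assoc (G.toFunctor.map (t.app M)) (G.toFunctor.map (t.app M)), h2,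
      Category.id_comp, hsq (G.toFunctor.obj M)]
    simp
end

section
/- Let t: G∘G ⟹ G∘G satisfy the QYBE and define t⁽ⁿ⁾ inductively by t⁽¹⁾ = t, t⁽ⁿ⁺¹⁾ = (t⁽ⁿ⁾)_G ∘ Gⁿ(t). Then G((t⁽ⁿ⁻¹⁾)_G) ∘ t⁽ⁿ⁺¹⁾ = t⁽ⁿ⁺¹⁾ ∘ (t⁽ⁿ⁻¹⁾)_{G²} for all n ≥ 2. -/
open CategoryTheory

variable {A : Type*} [Category A]

/-- `gpow G n M` is the `n`-th power `Gⁿ M` of the endofunctor `G` applied to `M`. -/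
def gpow (Gf : A ⥤ A) : ℕ → A → A
  | 0, M => M
  | n+1, M => gpow Gf n (Gf.obj M)

/-- `gmap G n f = Gⁿ(f)`. -/
def gmap (Gf : A ⥤ A) : (n : ℕ) → {X Y : A} → (X ⟶ Y) → (gpow Gf n X ⟶ gpow Gf n Y)
  | 0, _, _, f => f
  | n+1, _, _, f => gmap Gf n (Gf.map f)

lemma gpow_succ_out (Gf : A ⥤ A) : ∀ (n : ℕ) (M : A), gpow Gf (n+1) M = Gf.obj (gpow Gf n M)
  | 0, _ => rfl
  | n+1, M => gpow_succ_out Gf n (Gf.obj M)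

lemma gpow_add (Gf : A ⥤ A) : ∀ (a b : ℕ) (M : A), gpow Gf a (gpow Gf b M) = gpow Gf (a + b) M
  | a, 0, M => rfl
  | a, b+1, M => by
      rw [Nat.add_succ]
      exact gpow_add Gf a b (Gf.obj M)

lemma gpow_add' (Gf : A ⥤ A) (a b c : ℕ) (h : a + b = c) (M : A) :
    gpow Gf a (gpow Gf b M) = gpow Gf c M := by subst h; exact gpow_add Gf a b M

/-- `tpow G t n` is the component family of `t⁽ⁿ⁺¹⁾`, where `t⁽¹⁾ = t` and
`t⁽ⁿ⁺¹⁾ = (t⁽ⁿ⁾)_G ∘ Gⁿ(t)`. -/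
def tpow (Gf : A ⥤ A) (t : Gf ⋙ Gf ⟶ Gf ⋙ Gf) :
    (n : ℕ) → (M : A) → (gpow Gf (n+2) M ⟶ gpow Gf (n+2) M)
  | 0, M => t.app M
  | n+1, M => gmap Gf (n+1) (t.app M) ≫ tpow Gf t n (Gf.obj M)


/-!
Write `sⱼ = Gʲ(t)` for `t` acting on the `j`-th and `(j+1)`-st copies of `G`, counted from the
outside, so that `t⁽ⁿ⁺¹⁾ = sₙ ≫ ⋯ ≫ s₀`. Naturality of `t` makes `sᵢ` and `sⱼ` commute for
`|i - j| ≥ 2` and makes every `t⁽ⁿ⁾` natural, while the QYBE is the braid relation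
`sⱼ₊₁ ≫ sⱼ ≫ sⱼ₊₁ = sⱼ ≫ sⱼ₊₁ ≫ sⱼ`. Together they give `t⁽ᵏ⁺²⁾ ≫ sₖ₊₁ = sₖ ≫ t⁽ᵏ⁺²⁾`: conjugation
by `t⁽ᵏ⁺²⁾` shifts the innermost generator one step outwards. The theorem follows by induction on
`n`, pasting these commutative squares.
-/

lemma CategoryTheory.CommSq.comp_comp_of_braid {C : Type*} [Category C] {P : C} {a b c : P ⟶ P}
    (hab : a ≫ b ≫ a = b ≫ a ≫ b) (hc : CommSq c a a c) : CommSq (a ≫ b ≫ c) b a (a ≫ b ≫ c) :=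
  ⟨by simp only [Category.assoc, hc.w, reassoc_of% hab]⟩

def SatisfiesQYBE (Gf : A ⥤ A) (t : Gf ⋙ Gf ⟶ Gf ⋙ Gf) : Prop :=
  ∀ M : A, Gf.map (t.app M) ≫ t.app (Gf.obj M) ≫ Gf.map (t.app M) =
    t.app (Gf.obj M) ≫ Gf.map (t.app M) ≫ t.app (Gf.obj M)

/-- `G(f)` for `f : Gⁿ X ⟶ Gⁿ Y`; since `gpow` adds new copies of `G` on the inside, this needs
the transport along `gpow_succ_out`. -/
def mapOut (Gf : A ⥤ A) {n : ℕ} {X Y : A} (f : gpow Gf n X ⟶ gpow Gf n Y) :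
    gpow Gf (n+1) X ⟶ gpow Gf (n+1) Y :=
  eqToHom (gpow_succ_out Gf n X) ≫ Gf.map f ≫ eqToHom (gpow_succ_out Gf n Y).symm

section

variable (Gf : A ⥤ A)

lemma gmap_comp : ∀ (n : ℕ) {X Y Z : A} (f : X ⟶ Y) (g : Y ⟶ Z),
    gmap Gf n (f ≫ g) = gmap Gf n f ≫ gmap Gf n g
  | 0, _, _, _, _, _ => rfl
  | n+1, _, _, _, f, g => (congrArg (gmap Gf n) (Gf.map_comp f g)).trans (gmap_comp n _ _)

lemma mapOut_comp {n : ℕ} {X Y Z : A} (f : gpow Gf n X ⟶ gpow Gf n Y)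
    (g : gpow Gf n Y ⟶ gpow Gf n Z) :
    mapOut Gf (f ≫ g) = mapOut Gf f ≫ mapOut Gf g := by
  simp [mapOut]

lemma mapOut_gmap : ∀ (n : ℕ) {X Y : A} (f : X ⟶ Y), mapOut Gf (gmap Gf n f) = gmap Gf (n+1) f
  | 0, _, _, f => (Category.id_comp _).trans (Category.comp_id (Gf.map f))
  | n+1, _, _, f => mapOut_gmap n (Gf.map f)

variable (t : Gf ⋙ Gf ⟶ Gf ⋙ Gf)

lemma gmap_naturality (k : ℕ) {X Y : A} (g : X ⟶ Y) :
    CommSq (gmap Gf (k+2) g) (gmap Gf k (t.app X)) (gmap Gf k (t.app Y)) (gmap Gf (k+2) g) := by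
  have h := congrArg (gmap Gf k) (t.naturality g)
  rw [gmap_comp, gmap_comp] at h
  exact ⟨h⟩

lemma tpow_naturality : ∀ (n : ℕ) {Y Z : A} (h : Y ⟶ Z),
    CommSq (gmap Gf (n+2) h) (tpow Gf t n Y) (tpow Gf t n Z) (gmap Gf (n+2) h)
  | 0, _, _, h => ⟨t.naturality h⟩
  | n+1, _, _, h => (gmap_naturality Gf t (n+1) h).vert_comp (tpow_naturality n (Gf.map h))

lemma mapOut_tpow_zero (X : A) : mapOut Gf (tpow Gf t 0 X) = gmap Gf 1 (t.app X) :=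
  mapOut_gmap Gf 0 (t.app X)

lemma mapOut_tpow_succ (n : ℕ) (X : A) :
    mapOut Gf (tpow Gf t (n+1) X) = gmap Gf (n+2) (t.app X) ≫ mapOut Gf (tpow Gf t n (Gf.obj X)) :=
  (mapOut_comp Gf _ _).trans (mapOut_gmap Gf (n+1) (t.app X) =≫ _)

end

namespace SatisfiesQYBE

variable {Gf : A ⥤ A} {t : Gf ⋙ Gf ⟶ Gf ⋙ Gf}

lemma gmap_braid (hqybe : SatisfiesQYBE Gf t) (k : ℕ) (X : A) :
    gmap Gf (k+1) (t.app X) ≫ gmap Gf k (t.app (Gf.obj X)) ≫ gmap Gf (k+1) (t.app X) =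
      gmap Gf k (t.app (Gf.obj X)) ≫ gmap Gf (k+1) (t.app X) ≫ gmap Gf k (t.app (Gf.obj X)) := by
  have h := congrArg (gmap Gf k) (hqybe X)
  rwa [gmap_comp, gmap_comp, gmap_comp, gmap_comp] at h

lemma tpow_conj (hqybe : SatisfiesQYBE Gf t) :
    ∀ (k : ℕ) (X : A),
      CommSq (tpow Gf t (k+1) X) (gmap Gf k (t.app (Gf.obj X))) (gmap Gf (k+1) (t.app X))
        (tpow Gf t (k+1) X)
  | 0, X => ⟨(Category.assoc _ _ _).trans (hqybe X)⟩
  | k+1, X => CommSq.comp_comp_of_braid (hqybe.gmap_braid (k+1) X)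
      (tpow_naturality Gf t k (t.app X)).flip

lemma commSq_tpow_mapOut (hqybe : SatisfiesQYBE Gf t) :
    ∀ (n : ℕ) (M : A), CommSq (tpow Gf t (n+2) M) (tpow Gf t n (Gf.obj (Gf.obj M)))
      (mapOut Gf (X := Gf.obj M) (tpow Gf t n (Gf.obj M))) (tpow Gf t (n+2) M)
  | 0, M => by
      rw [mapOut_tpow_zero]
      exact (gmap_naturality Gf t 0 (t.app M)).horiz_comp (hqybe.tpow_conj 0 (Gf.obj M))
  | n+1, M => by
      rw [mapOut_tpow_succ]
      exact ((gmap_naturality Gf t (n+1) (t.app M)).vert_comp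
        (tpow_naturality Gf t n (Gf.map (t.app M)))).horiz_comp
        ((hqybe.tpow_conj (n+1) (Gf.obj M)).vert_comp (hqybe.commSq_tpow_mapOut n (Gf.obj M)))

end SatisfiesQYBE

/-- if `t` satisfies the QYBE then
`G((t⁽ⁿ⁻¹⁾)_G) ∘ t⁽ⁿ⁺¹⁾ = t⁽ⁿ⁺¹⁾ ∘ (t⁽ⁿ⁻¹⁾)_{G²}` for all `n ≥ 2`
(stated with `n = m+2`, and `tpow Gf t k = t⁽ᵏ⁺¹⁾`). -/
theorem tpow_braid (Gf : A ⥤ A) (t : Gf ⋙ Gf ⟶ Gf ⋙ Gf)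
    (hqybe : ∀ M : A, Gf.map (t.app M) ≫ t.app (Gf.obj M) ≫ Gf.map (t.app M) =
      t.app (Gf.obj M) ≫ Gf.map (t.app M) ≫ t.app (Gf.obj M))
    (m : ℕ) (M : A) :
    tpow Gf t (m + 2) M ≫
        eqToHom (show gpow Gf (m+4) M = Gf.obj (gpow Gf (m+2) (Gf.obj M)) from
          gpow_succ_out Gf (m+2) (Gf.obj M)) ≫
        Gf.map (tpow Gf t m (Gf.obj M)) ≫
        eqToHom (show Gf.obj (gpow Gf (m+2) (Gf.obj M)) = gpow Gf (m+4) M from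
          (gpow_succ_out Gf (m+2) (Gf.obj M)).symm) =
      tpow Gf t m (Gf.obj (Gf.obj M)) ≫ tpow Gf t (m + 2) M :=
  (SatisfiesQYBE.commSq_tpow_mapOut hqybe m M).w
end
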